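/- arXiv:0904.4573 — 5 statements merged into one kernel-verified Lean document; each statement's English description precedes it below -/
import Mathlib

section
/- Let F be a field and let P ∈ F[x₁,…,xₙ] be a polynomial. Suppose the total degree of P equals k₁ + k₂ + ⋯ + kₙ, where each kᵢ is a non-negative integer, and suppose the coefficient of the monomial x₁^{k₁} x₂^{k₂} ⋯ xₙ^{kₙ} in P is non-zero. Then for any finite subsets A₁,…,Aₙ of F with |Aᵢ| ≥ kᵢ + 1 for all i = 1,…,n, there exist elements a₁ ∈ A₁, …, aₙ ∈ Aₙ such that P(a₁,…,aₙ) ≠ 0. -/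
/-- **Combinatorial Nullstellensatz** (Alon). Let `F` be a field and `P` a polynomial in
`F[x₁,…,xₙ]` whose total degree equals `k₁ + ⋯ + kₙ` and in which the coefficient of the
monomial `x₁^{k₁} ⋯ xₙ^{kₙ}` is nonzero. Then for any finite subsets `A₁,…,Aₙ` of `F` with
`|Aᵢ| ≥ kᵢ + 1`, there are `aᵢ ∈ Aᵢ` with `P(a₁,…,aₙ) ≠ 0`. -/
theorem combinatorial_nullstellensatz_field
    {F : Type*} [Field F] {n : ℕ} (P : MvPolynomial (Fin n) F) (k : Fin n → ℕ)
    (hdeg : P.totalDegree = ∑ i, k i)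
    (hcoeff : MvPolynomial.coeff (Finsupp.equivFunOnFinite.symm k) P ≠ 0)
    (A : Fin n → Finset F) (hA : ∀ i, k i + 1 ≤ (A i).card) :
    ∃ a : Fin n → F, (∀ i, a i ∈ A i) ∧ MvPolynomial.eval a P ≠ 0 := by
  refine MvPolynomial.combinatorial_nullstellensatz_exists_eval_nonzero P _ hcoeff ?_ A hA
  rw [hdeg, Finsupp.degree_eq_sum]
  rfl
end

section
/- Let R be an integral domain and let P ∈ R[x₁,…,xₙ] be a polynomial. Suppose the total degree of P equals k₁ + k₂ + ⋯ + kₙ, where each kᵢ is a non-negative integer, and suppose the coefficient of the monomial x₁^{k₁} x₂^{k₂} ⋯ xₙ^{kₙ} in P is non-zero. Then for any finite subsets A₁,…,Aₙ of R with |Aᵢ| ≥ kᵢ + 1 for all i = 1,…,n, there exist elements a₁ ∈ A₁, …, aₙ ∈ Aₙ such that P(a₁,…,aₙ) ≠ 0. -/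
/-- **Combinatorial Nullstellensatz over an integral domain**. Let `R` be an integral domain
and `P` a polynomial in `R[x₁,…,xₙ]` whose total degree equals `k₁ + ⋯ + kₙ` and in which the
coefficient of the monomial `x₁^{k₁} ⋯ xₙ^{kₙ}` is nonzero. Then for any finite subsets
`A₁,…,Aₙ` of `R` with `|Aᵢ| ≥ kᵢ + 1`, there are `aᵢ ∈ Aᵢ` with `P(a₁,…,aₙ) ≠ 0`. -/
theorem combinatorial_nullstellensatz_domain
    {R : Type*} [CommRing R] [IsDomain R] {n : ℕ} (P : MvPolynomial (Fin n) R) (k : Fin n → ℕ)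
    (hdeg : P.totalDegree = ∑ i, k i)
    (hcoeff : MvPolynomial.coeff (Finsupp.equivFunOnFinite.symm k) P ≠ 0)
    (A : Fin n → Finset R) (hA : ∀ i, k i + 1 ≤ (A i).card) :
    ∃ a : Fin n → R, (∀ i, a i ∈ A i) ∧ MvPolynomial.eval a P ≠ 0 :=
  MvPolynomial.combinatorial_nullstellensatz_exists_eval_nonzero P _ hcoeff
    (by rw [hdeg, Finsupp.degree_eq_sum]; rfl) A hA
end

section
/- Let R be a commutative ring with unity and let P ∈ R[x₁,…,xₙ] be a polynomial. Suppose the total degree of P equals k₁ + k₂ + ⋯ + kₙ, where each kᵢ is a non-negative integer, and suppose the coefficient of the monomial x₁^{k₁} x₂^{k₂} ⋯ xₙ^{kₙ} in P is non-zero. Let A₁,…,Aₙ be finite subsets of R with |Aᵢ| ≥ kᵢ + 1 for all i, such that for each i and any two distinct elements a, b ∈ Aᵢ, the difference a − b is not a zero divisor in R. Then there exist elements a₁ ∈ A₁, …, aₙ ∈ Aₙ such that P(a₁,…,aₙ) ≠ 0. -/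
/-
Michałek's induction on the degree. Pick `i` with `kᵢ ≠ 0` and `a ∈ Aᵢ`, and divide:
`P = (xᵢ - a) Q + r` with `r` free of `xᵢ`. Then `deg Q < deg P` and the coefficient of
`x^k / xᵢ` in `Q` is that of `x^k` in `P`, so by induction `Q` is nonzero at some `x` of the
smaller grid with `a` removed from `Aᵢ`. Since `r` does not see `xᵢ`,
`P(x) - P(x[xᵢ ↦ a]) = (xᵢ - a) Q(x)`, which is nonzero because `xᵢ - a` is a
non-zero-divisor.
-/

open MvPolynomial Finset MonomialOrder
open scoped nonZeroDivisors

theorem tsub_single_lt_card_update_erase {α σ : Type*} [DecidableEq α] [DecidableEq σ]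
    {k : σ →₀ ℕ} {A : σ → Finset α}
    (hA : ∀ j, k j < #(A j)) {i : σ} (hki : k i ≠ 0) {a : α} (ha : a ∈ A i) (j : σ) :
    (k - Finsupp.single i 1 : σ →₀ ℕ) j < #(Function.update A i ((A i).erase a) j) := by
  have := hA j
  rcases eq_or_ne j i with rfl | hj
  · simp only [Function.update_self, card_erase_of_mem ha, Finsupp.tsub_apply,
      Finsupp.single_eq_same]
    omega
  · simpa [hj] using this

namespace MvPolynomial

variable {R σ : Type*} [CommRing R]

theorem exists_eq_X_sub_C_mul_add [Finite σ] (i : σ) (a : R) {P : MvPolynomial σ R} {N : ℕ}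
    (hP : P.totalDegree ≤ N + 1) :
    ∃ Q r : MvPolynomial σ R, P = (X i - C a) * Q + r ∧ Q.totalDegree ≤ N ∧
      ∀ c ∈ r.support, c i = 0 := by
  rcases subsingleton_or_nontrivial R with _ | _
  · exact ⟨0, 0, Subsingleton.elim _ _, by simp, by simp⟩
  -- any linear order on `σ` will do: `degLex` turns the division bound into a total-degree bound
  let _ : LinearOrder σ := WellOrderingRel.isWellOrder.linearOrder
  have hmonic := degLex.monic_X_sub_C i a
  obtain ⟨Q, r, hPQr, hQ, hr⟩ :=
    degLex.div_single (by rw [hmonic.leadingCoeff_eq_one]; exact isUnit_one) P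
  refine ⟨Q, r, by rw [hPQr, mul_comm], ?_, fun c hc => ?_⟩
  · rcases eq_or_ne Q 0 with rfl | hQ0
    · simp
    have hdeg := degLex_totalDegree_monotone hQ
    rw [← degree_degLexDegree,
      degree_mul_of_isRegular_left (by rw [hmonic.leadingCoeff_eq_one]; exact isRegular_one) hQ0,
      degLex.degree_X_sub_C, map_add, degree_degLexDegree, Finsupp.degree_single] at hdeg
    omega
  · have := hr c hc
    rw [degLex.degree_X_sub_C, Finsupp.single_le_iff] at this
    omega

theorem eval_update_of_forall_mem_support [DecidableEq σ] {r : MvPolynomial σ R} {i : σ}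
    (hr : ∀ c ∈ r.support, c i = 0) (x : σ → R) (y : R) :
    eval (Function.update x i y) r = eval x r := by
  apply eval₂_congr
  intro j c hj hc
  have : j ≠ i := by
    rintro rfl
    exact Finsupp.mem_support_iff.1 hj (hr c (mem_support_iff.2 hc))
  exact Function.update_of_ne this _ _

section Division

variable [DecidableEq σ] {P Q r : MvPolynomial σ R} {i : σ} {a : R}

theorem eval_sub_eval_update_eq_mul (hP : P = (X i - C a) * Q + r)
    (hr : ∀ c ∈ r.support, c i = 0) (x : σ → R) :
    eval x P - eval (Function.update x i a) P = (x i - a) * eval x Q := by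
  subst hP
  simp only [map_add, map_mul, map_sub, eval_X, eval_C, Function.update_self, sub_self,
    zero_mul, zero_add, eval_update_of_forall_mem_support hr]
  ring

theorem eval_ne_zero_or_eval_update_ne_zero (hP : P = (X i - C a) * Q + r)
    (hr : ∀ c ∈ r.support, c i = 0) {x : σ → R} (hxa : x i - a ∈ R⁰)
    (hQ : eval x Q ≠ 0) :
    eval x P ≠ 0 ∨ eval (Function.update x i a) P ≠ 0 := by
  by_contra! hvan
  have := eval_sub_eval_update_eq_mul hP hr x
  rw [hvan.1, hvan.2, sub_zero, eq_comm, mul_left_mem_nonZeroDivisors_eq_zero_iff hxa] at this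
  exact hQ this

theorem coeff_sub_single_eq_coeff (hP : P = (X i - C a) * Q + r)
    (hr : ∀ c ∈ r.support, c i = 0) {k : σ →₀ ℕ} (hki : k i ≠ 0)
    (hQ : Q.totalDegree < k.degree) :
    coeff (k - Finsupp.single i 1) Q = coeff k P := by
  have hkr : coeff k r = 0 := notMem_support_iff.1 fun hk => hki (hr k hk)
  have hkQ : coeff k Q = 0 := coeff_eq_zero_of_totalDegree_lt hQ
  rw [hP, coeff_add, sub_mul, coeff_sub, coeff_X_mul', if_pos (Finsupp.mem_support_iff.2 hki),
    coeff_C_mul, hkQ, hkr]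
  ring

end Division

theorem exists_eval_ne_zero_of_coeff_ne_zero [Finite σ] {P : MvPolynomial σ R} {k : σ →₀ ℕ}
    (hdeg : P.totalDegree ≤ k.degree) (hk : coeff k P ≠ 0) (A : σ → Finset R)
    (hA : ∀ i, k i < #(A i))
    (hzd : ∀ i, ∀ a ∈ A i, ∀ b ∈ A i, a ≠ b → a - b ∈ R⁰) :
    ∃ x : σ → R, (∀ i, x i ∈ A i) ∧ eval x P ≠ 0 := by
  classical
  generalize hN : k.degree = N at hdeg
  induction N generalizing P k A with
  | zero =>
    have hk0 : k = 0 := (Finsupp.degree_eq_zero_iff k).1 hN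
    choose x hx using fun i => Finset.card_pos.1 (Nat.zero_lt_of_lt (hA i))
    refine ⟨x, hx, ?_⟩
    rw [totalDegree_eq_zero_iff_eq_C.1 (Nat.le_zero.1 hdeg), eval_C]
    rwa [hk0] at hk
  | succ N ih =>
    have hk0 : k ≠ 0 := by
      rintro rfl
      simp at hN
    obtain ⟨i, hi⟩ := Finsupp.support_nonempty_iff.2 hk0
    have hki := Finsupp.mem_support_iff.1 hi
    obtain ⟨a, ha⟩ := Finset.card_pos.1 (Nat.zero_lt_of_lt (hA i))
    obtain ⟨Q, r, hP, hQ, hr⟩ := exists_eq_X_sub_C_mul_add i a hdeg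
    set k' := k - Finsupp.single i 1
    have hk' : k = k' + Finsupp.single i 1 :=
      (tsub_add_cancel_of_le (Finsupp.single_le_iff.2 (Nat.one_le_iff_ne_zero.2 hki))).symm
    have hk'N : k'.degree = N := by
      rw [hk', map_add, Finsupp.degree_single] at hN; omega
    have hQk : coeff k' Q = coeff k P :=
      coeff_sub_single_eq_coeff hP hr hki (by omega)
    set A' := Function.update A i ((A i).erase a)
    have hA'A : ∀ j, A' j ⊆ A j := by
      intro j
      rcases eq_or_ne j i with rfl | hj
      · simpa [A'] using erase_subset a (A j)
      · simp [A', hj]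
    obtain ⟨x, hx, hxQ⟩ := ih (by rwa [hQk]) A' (tsub_single_lt_card_update_erase hA hki ha)
      (fun j b hb c hc => hzd j b (hA'A j hb) c (hA'A j hc)) hk'N hQ
    have hxA : ∀ j, x j ∈ A j := fun j => hA'A j (hx j)
    have hxi : x i ∈ (A i).erase a := by simpa [A'] using hx i
    have hxa : x i - a ∈ R⁰ := hzd i _ (mem_of_mem_erase hxi) a ha (ne_of_mem_erase hxi)
    rcases eval_ne_zero_or_eval_update_ne_zero hP hr hxa hxQ with hxP | hxP
    · exact ⟨x, hxA, hxP⟩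
    · have hxaA := (Function.forall_update_iff x (p := fun j y => y ∈ A j)).2
        ⟨ha, fun j _ => hxA j⟩
      exact ⟨_, hxaA, hxP⟩

end MvPolynomial

/-- **Combinatorial Nullstellensatz over a commutative ring with unity**. Let `R` be a
commutative ring with `1` and `P` a polynomial in `R[x₁,…,xₙ]` whose total degree equals
`k₁ + ⋯ + kₙ` and in which the coefficient of the monomial `x₁^{k₁} ⋯ xₙ^{kₙ}` is nonzero.
Let `A₁,…,Aₙ` be finite subsets of `R` with `|Aᵢ| ≥ kᵢ + 1` such that for any two distinct
elements `a, b ∈ Aᵢ` the difference `a - b` is not a zero divisor in `R` (i.e. there is no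
`s ≠ 0` with `(a - b) * s = 0`). Then there are `aᵢ ∈ Aᵢ` with `P(a₁,…,aₙ) ≠ 0`. -/
theorem combinatorial_nullstellensatz_comm_ring
    {R : Type*} [CommRing R] {n : ℕ} (P : MvPolynomial (Fin n) R) (k : Fin n → ℕ)
    (hdeg : P.totalDegree = ∑ i, k i)
    (hcoeff : MvPolynomial.coeff (Finsupp.equivFunOnFinite.symm k) P ≠ 0)
    (A : Fin n → Finset R) (hA : ∀ i, k i + 1 ≤ (A i).card)
    (hzd : ∀ i, ∀ a ∈ A i, ∀ b ∈ A i, a ≠ b → ¬ ∃ s : R, s ≠ 0 ∧ (a - b) * s = 0) :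
    ∃ a : Fin n → R, (∀ i, a i ∈ A i) ∧ MvPolynomial.eval a P ≠ 0 := by
  refine exists_eval_ne_zero_of_coeff_ne_zero ?_ hcoeff A hA ?_
  · rw [Finsupp.degree_eq_sum]
    exact hdeg.le
  · intro i a ha b hb hab
    refine mem_nonZeroDivisors_iff_left.2 fun s hs => ?_
    by_contra hs0
    exact hzd i a ha b hb hab ⟨s, hs0, hs⟩
end

section
/- Let p be a prime and let A and B be two non-empty subsets of ℤ/pℤ. Let C = {x ∈ ℤ/pℤ : x = a + b for some a ∈ A, b ∈ B with a ≠ b}. Then |C| ≥ min(p, |A| + |B| − 3). -/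
/-!
Alon–Nathanson–Ruzsa via the Combinatorial Nullstellensatz. If `#A = m + 1`, `#B = n + 1` and
every restricted sum `a + b` lies in a set `D` with `#D = m + n - 1`, the polynomial
`(x - y) ∏_{c ∈ D} (x + y - c)` vanishes on `A × B`. Its total degree is `m + n` and its
coefficient of `x^m y^n` equals that of `(x - y)(x + y)^(m + n - 1)`, namely
`C(m+n-1, m-1) - C(m+n-1, m)`, which is nonzero in characteristic `p > m + n - 1` when `m ≠ n`;
this contradicts the Nullstellensatz. The theorem follows by shrinking `A` and `B` to subsets of
distinct sizes with `#A' + #B' = #C + 3`.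
-/

open MvPolynomial Finset

theorem coeff_X_sub_X_mul_X_add_X_pow {R : Type*} [CommRing R] (i j : ℕ) :
    coeff (Finsupp.single 0 (i + 1) + Finsupp.single 1 j)
        ((X 0 - X 1) * (X 0 + X 1) ^ (i + j) : MvPolynomial (Fin 2) R) =
      (i + j).choose i - (i + j).choose (i + 1) := by
  rw [sub_mul, coeff_sub, coeff_X_mul', coeff_X_mul', coeff_add_pow, coeff_add_pow]
  obtain _ | j := j
  · simp [Nat.choose_succ_self]
  · simp [Nat.add_right_comm i 1, ← add_assoc]

theorem coeff_mul_aeval_of_isHomogeneous {σ R : Type*} [CommRing R] {φ Z : MvPolynomial σ R}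
    {n : ℕ} (hφ : φ.IsHomogeneous n) (hZ : Z.IsHomogeneous 1) (q : Polynomial R)
    {d : σ →₀ ℕ} (hd : d.degree = n + q.natDegree) :
    coeff d (φ * Polynomial.aeval Z q) = q.leadingCoeff * coeff d (φ * Z ^ q.natDegree) := by
  rw [Polynomial.aeval_eq_sum_range, mul_sum, coeff_sum,
    sum_eq_single_of_mem q.natDegree (self_mem_range_succ _)]
  · rw [mul_smul_comm, coeff_smul, smul_eq_mul, Polynomial.leadingCoeff]
  · intro i _ hi
    rw [mul_smul_comm, coeff_smul, (hφ.mul (hZ.pow i)).coeff_eq_zero, smul_zero]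
    omega

theorem coeff_mul_prod_sub_C_of_isHomogeneous {σ R : Type*} [CommRing R] [Nontrivial R]
    {φ Z : MvPolynomial σ R} {n : ℕ} (hφ : φ.IsHomogeneous n) (hZ : Z.IsHomogeneous 1)
    (D : Finset R) {d : σ →₀ ℕ} (hd : d.degree = n + #D) :
    coeff d (φ * ∏ c ∈ D, (Z - C c)) = coeff d (φ * Z ^ #D) := by
  have hprod : ∏ c ∈ D, (Z - C c) = Polynomial.aeval Z (Lagrange.nodal D id) := by
    simp [Lagrange.nodal, map_prod]
  have hdeg : (Lagrange.nodal D id).natDegree = #D := Lagrange.natDegree_nodal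
  rw [hprod, coeff_mul_aeval_of_isHomogeneous hφ hZ _ (hdeg ▸ hd),
    Lagrange.nodal_monic.leadingCoeff, one_mul, hdeg]

theorem exists_add_notMem_of_choose_sub_ne_zero {F : Type*} [Field F] {A B D : Finset F}
    {i j : ℕ} (hA : #A = i + 2) (hB : #B = j + 1) (hD : #D = i + j)
    (hchoose : ((i + j).choose i - (i + j).choose (i + 1) : F) ≠ 0) :
    ∃ a ∈ A, ∃ b ∈ B, a ≠ b ∧ a + b ∉ D := by
  have hdiff : (X 0 - X 1 : MvPolynomial (Fin 2) F).IsHomogeneous 1 :=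
    (isHomogeneous_X _ _).sub (isHomogeneous_X _ _)
  have hsum : (X 0 + X 1 : MvPolynomial (Fin 2) F).IsHomogeneous 1 :=
    (isHomogeneous_X _ _).add (isHomogeneous_X _ _)
  set f : MvPolynomial (Fin 2) F := (X 0 - X 1) * ∏ c ∈ D, (X 0 + X 1 - C c)
  set t : Fin 2 →₀ ℕ := Finsupp.single 0 (i + 1) + Finsupp.single 1 j
  have ht : t.degree = 1 + #D := by simp [t, Finsupp.degree_single]; omega
  have hcoeff : coeff t f ≠ 0 := by
    rwa [coeff_mul_prod_sub_C_of_isHomogeneous hdiff hsum D ht, hD,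
      coeff_X_sub_X_mul_X_add_X_pow]
  have hdeg : f.totalDegree = t.degree := by
    refine le_antisymm ?_ (le_totalDegree (mem_support_iff.mpr hcoeff))
    calc f.totalDegree ≤ 1 + ∑ c ∈ D, 1 := by
          refine (totalDegree_mul _ _).trans (add_le_add hdiff.totalDegree_le ?_)
          refine (totalDegree_finsetProd _ _).trans (sum_le_sum fun c _ => ?_)
          exact (totalDegree_sub_C_le _ _).trans hsum.totalDegree_le
      _ = t.degree := by rw [ht, card_eq_sum_ones]
  obtain ⟨s, hs, hfs⟩ := combinatorial_nullstellensatz_exists_eval_nonzero f t hcoeff hdeg ![A, B]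
    (by intro k; fin_cases k <;> simp [t, hA, hB])
  simp only [f, map_mul, map_sub, map_add, map_prod, eval_X, eval_C, mul_ne_zero_iff,
    sub_ne_zero, prod_ne_zero_iff] at hfs
  exact ⟨s 0, hs 0, s 1, hs 1, hfs.1, fun h => hfs.2 _ h rfl⟩

theorem choose_sub_choose_succ_ne_zero {F : Type*} [Field F] {p : ℕ} [CharP F p] (hp : p.Prime)
    {i j : ℕ} (hji : j ≤ i) (hijp : i + j < p) :
    ((i + j).choose i - (i + j).choose (i + 1) : F) ≠ 0 := by
  obtain _ | j := j
  · simp [Nat.choose_succ_self]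
  intro h
  have hchoose : ((i + (j + 1)).choose i : F) ≠ 0 := by
    rw [Ne, CharP.cast_eq_zero_iff F p, ← hp.coprime_iff_not_dvd]
    exact hp.coprime_choose_of_lt hijp (by omega)
  have hpascal : ((i + (j + 1)).choose (i + 1) : F) * (i + 1) =
      ((i + (j + 1)).choose i : F) * (j + 1) := by
    have := Nat.choose_succ_right_eq (i + (j + 1)) i
    rw [Nat.add_sub_cancel_left] at this
    exact_mod_cast congrArg (Nat.cast : ℕ → F) this
  rw [← sub_eq_zero.mp h] at hpascal
  have hcast : ((i + 1 : ℕ) : F) = ((j + 1 : ℕ) : F) := by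
    exact_mod_cast mul_left_cancel₀ hchoose hpascal
  have := ((CharP.natCast_eq_natCast F p).mp hcast).eq_of_lt_of_lt (by omega) (by omega)
  omega

theorem exists_add_notMem_of_card_ne {F : Type*} [Field F] {p : ℕ} [CharP F p] (hp : p.Prime)
    {A B D : Finset F} (hA : A.Nonempty) (hB : B.Nonempty) (hAB : #A ≠ #B)
    (hcard : #A + #B = #D + 3) (hDp : #D < p) :
    ∃ a ∈ A, ∃ b ∈ B, a ≠ b ∧ a + b ∉ D := by
  wlog hBA : #B < #A generalizing A B
  · obtain ⟨b, hb, a, ha, hba, hD⟩ := this hB hA hAB.symm (by omega) (by omega)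
    exact ⟨a, ha, b, hb, hba.symm, add_comm b a ▸ hD⟩
  have := hB.card_pos
  exact exists_add_notMem_of_choose_sub_ne_zero (i := #A - 2) (j := #B - 1) (by omega)
    (by omega) (by omega) (choose_sub_choose_succ_ne_zero hp (by omega) (by omega))

theorem exists_ne_add_eq_of_lt_add {a b s : ℕ} (ha : 0 < a) (hb : 0 < b) (hs : 3 ≤ s)
    (hsab : s < a + b) : ∃ x ≤ a, ∃ y ≤ b, 0 < x ∧ 0 < y ∧ x ≠ y ∧ x + y = s := by
  by_cases h : s ≤ a + 1
  · exact ⟨s - 1, by omega, 1, by omega, by omega, by omega, by omega, by omega⟩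
  by_cases h' : 2 * a = s
  · exact ⟨a - 1, by omega, a + 1, by omega, by omega, by omega, by omega, by omega⟩
  · exact ⟨a, le_rfl, s - a, by omega, ha, by omega, by omega, by omega⟩

/-- **Erdős–Heilbronn conjecture**. Let `p` be a prime and `A`, `B` two non-empty subsets of
`ℤ/pℤ`. Let `C = {x : x = a + b for some a ∈ A, b ∈ B, a ≠ b}` be the restricted sumset.
Then `|C| ≥ min (p, |A| + |B| - 3)`. -/
theorem erdos_heilbronn {p : ℕ} (hp : p.Prime) (A B C : Finset (ZMod p))
    (hA : A.Nonempty) (hB : B.Nonempty)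
    (hC : ∀ x : ZMod p, x ∈ C ↔ ∃ a ∈ A, ∃ b ∈ B, a ≠ b ∧ x = a + b) :
    min (p : ℤ) ((A.card : ℤ) + (B.card : ℤ) - 3) ≤ (C.card : ℤ) := by
  have := Fact.mk hp
  by_contra! hlt
  obtain ⟨hCp, hCAB⟩ := lt_min_iff.mp hlt
  obtain ⟨x, hxA, y, hyB, hx, hy, hxy, hsum⟩ :=
    exists_ne_add_eq_of_lt_add hA.card_pos hB.card_pos (le_add_self : 3 ≤ #C + 3) (by omega)
  obtain ⟨A', hA', rfl⟩ := exists_subset_card_eq hxA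
  obtain ⟨B', hB', rfl⟩ := exists_subset_card_eq hyB
  obtain ⟨a, ha, b, hb, hab, habC⟩ :=
    exists_add_notMem_of_card_ne hp (card_pos.mp hx) (card_pos.mp hy) hxy hsum (by omega)
  exact habC ((hC _).mpr ⟨a, hA' ha, b, hB' hb, hab, rfl⟩)
end

section
/- Let p be a prime with p > 2 and let A and B be subsets of ℤ/pℤ such that |A| + |B| − 3 ≥ p. Let C = {x ∈ ℤ/pℤ : x = a + b for some a ∈ A, b ∈ B with a ≠ b}. Then C = ℤ/pℤ. -/
/-! For each `x`, the sets `A` and `x - B` together have at least `|G| + 2` elements, so they share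
two elements `a ≠ a'`. Each gives a representation `x = a + (x - a)` with `x - a ∈ B`, and this is a
restricted one unless `a + a = x`; since doubling is injective in odd characteristic, at most one
of `a`, `a'` is a half of `x`. -/

open Finset Function

theorem Finset.card_add_card_le_card_inter_add_card_univ {α : Type*} [Fintype α] [DecidableEq α]
    (s t : Finset α) : #s + #t ≤ #(s ∩ t) + Fintype.card α := by
  rw [← card_inter_add_card_union]
  exact Nat.add_le_add_left (card_le_univ _) _

theorem add_self_injective_of_ringChar_ne_two {R : Type*} [Ring R] [IsDomain R]
    (hR : ringChar R ≠ 2) : Injective fun a : R => a + a := fun a b h => by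
  simp only [← two_mul] at h
  exact mul_left_cancel₀ (Ring.two_ne_zero hR) h

theorem exists_ne_add_eq_of_card_add_two_le {G : Type*} [AddCommGroup G] [Fintype G]
    [DecidableEq G] (hdouble : Injective fun a : G => a + a) {A B : Finset G}
    (hcard : Fintype.card G + 2 ≤ #A + #B) (x : G) :
    ∃ a ∈ A, ∃ b ∈ B, a ≠ b ∧ x = a + b := by
  have hcommon : 1 < #(A ∩ B.image (x - ·)) := by
    have := card_add_card_le_card_inter_add_card_univ A (B.image (x - ·))
    rw [card_image_of_injective _ sub_right_injective] at this
    omega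
  obtain ⟨a, ha, a', ha', hne⟩ := one_lt_card.1 hcommon
  obtain ⟨c, hc, hcx⟩ : ∃ c ∈ A ∩ B.image (x - ·), c + c ≠ x := by
    by_contra! h
    exact hne (hdouble ((h a ha).trans (h a' ha').symm))
  obtain ⟨hcA, b, hbB, rfl⟩ : c ∈ A ∧ ∃ b ∈ B, x - b = c := by simpa using hc
  exact ⟨x - b, hcA, b, hbB, fun h => hcx ((congrArg (x - b + ·) h).trans (sub_add_cancel x b)),
    (sub_add_cancel x b).symm⟩

/-- Let `p > 2` be a prime and `A`, `B` subsets of `ℤ/pℤ` with `|A| + |B| - 3 ≥ p`. Then the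
restricted sumset `C = {x : x = a + b for some a ∈ A, b ∈ B, a ≠ b}` is all of `ℤ/pℤ`. -/
theorem restricted_sumset_eq_univ {p : ℕ} (hp : p.Prime) (hp2 : 2 < p)
    (A B C : Finset (ZMod p))
    (hcard : (p : ℤ) ≤ (A.card : ℤ) + (B.card : ℤ) - 3)
    (hC : ∀ x : ZMod p, x ∈ C ↔ ∃ a ∈ A, ∃ b ∈ B, a ≠ b ∧ x = a + b) :
    ∀ x : ZMod p, x ∈ C := by
  have : Fact p.Prime := ⟨hp⟩
  have hdouble : Injective fun a : ZMod p => a + a :=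
    add_self_injective_of_ringChar_ne_two (by rw [ZMod.ringChar_zmod_n]; omega)
  have hcard' : Fintype.card (ZMod p) + 2 ≤ #A + #B := by
    rw [ZMod.card]
    omega
  exact fun x => (hC x).2 (exists_ne_add_eq_of_card_add_two_le hdouble hcard' x)
end
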